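/- Let K̃ > 0 and let F ⊆ ℝⁿ be closed. Define F* := {x ∈ ℝⁿ : γ(F ∩ B(x,r)) ≥ (1/2)·γ(B(x,r)) for all r ∈ (0, K̃·m(x)]}. Then the complement of F* is contained in {x ∈ ℝⁿ : M*_{K̃}(1_{ℝⁿ∖F})(x) > 1/2}, and consequently γ(ℝⁿ∖F*) ≤ C γ(ℝⁿ∖F) with C depending only on K̃ and the dimension n. -/

import Mathlib

open MeasureTheory Metric Set
open scoped ENNReal NNReal BigOperators

noncomputable section

/-- The gaussian measure `dγ(x) = (2π)^{-n/2} exp(-|x|²/2) dx` on `ℝⁿ`. -/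
def gaussMeasure (n : ℕ) : Measure (EuclideanSpace ℝ (Fin n)) :=
  volume.withDensity fun x =>
    ENNReal.ofReal ((2 * Real.pi) ^ (-(n : ℝ) / 2) * Real.exp (-‖x‖ ^ 2 / 2))

/-- `m(x) = min {1, 1/‖x‖}`. -/
def mfun {n : ℕ} (x : EuclideanSpace ℝ (Fin n)) : ℝ :=
  if ‖x‖ ≤ 1 then 1 else ‖x‖⁻¹

/-- Ornstein–Uhlenbeck (Mehler) semigroup `e^{-tL} u (x)`. -/
def mehler (n : ℕ) (u : EuclideanSpace ℝ (Fin n) → ℝ) (t : ℝ)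
    (x : EuclideanSpace ℝ (Fin n)) : ℝ :=
  ∫ y, u (Real.exp (-t) • x + Real.sqrt (1 - Real.exp (-2 * t)) • y) ∂gaussMeasure n

/-- The gaussian conical square function `S_a u (x)`. -/
def Sfun (n : ℕ) (a : ℝ) (u : EuclideanSpace ℝ (Fin n) → ℝ)
    (x : EuclideanSpace ℝ (Fin n)) : ℝ≥0∞ :=
  (∫⁻ t in Set.Ioo (0 : ℝ) (a * mfun x),
      (∫⁻ y in ball x t,
        (gaussMeasure n (ball y t))⁻¹ *
          ENNReal.ofReal ((t * ‖fderiv ℝ (mehler n u (t ^ 2)) y‖) ^ 2) ∂gaussMeasure n) /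
        ENNReal.ofReal t) ^ (1 / 2 : ℝ)

/-- The gaussian non-tangential maximal function `T*_{(A,a)} u (x)`. -/
def Tstar (n : ℕ) (A a : ℝ) (u : EuclideanSpace ℝ (Fin n) → ℝ)
    (x : EuclideanSpace ℝ (Fin n)) : ℝ≥0∞ :=
  ⨆ (y : EuclideanSpace ℝ (Fin n)) (t : ℝ) (_ : dist y x < A * t) (_ : 0 < t)
      (_ : t < a * mfun x),
    ((gaussMeasure n (ball y (A * t)))⁻¹ *
        ∫⁻ z in ball y (A * t), ENNReal.ofReal ((mehler n u (t ^ 2) z) ^ 2) ∂gaussMeasure n) ^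
      (1 / 2 : ℝ)

/-- The admissible (gaussian) Hardy–Littlewood maximal function `M*_a f (x)`. -/
def Mstar (n : ℕ) (a : ℝ) (f : EuclideanSpace ℝ (Fin n) → ℝ)
    (x : EuclideanSpace ℝ (Fin n)) : ℝ≥0∞ :=
  ⨆ (r : ℝ) (_ : 0 < r) (_ : r ≤ a * mfun x),
    (gaussMeasure n (ball x r))⁻¹ *
      ∫⁻ y in ball x r, ENNReal.ofReal |f y| ∂gaussMeasure n

/-- The admissible cone `Γ^{(A,a)}_x(γ)`. -/
def cone (n : ℕ) (A a : ℝ) (x : EuclideanSpace ℝ (Fin n)) :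
    Set (EuclideanSpace ℝ (Fin n) × ℝ) :=
  {p | dist p.1 x < A * p.2 ∧ 0 < p.2 ∧ p.2 < a * mfun x}

/-- The modified admissible cone `Γ̃^{(A,a)}_x(γ)`. -/
def coneT (n : ℕ) (A a : ℝ) (x : EuclideanSpace ℝ (Fin n)) :
    Set (EuclideanSpace ℝ (Fin n) × ℝ) :=
  {p | dist p.1 x < A * p.2 ∧ 0 < p.2 ∧ p.2 < a * mfun p.1}

/-- The dyadic cube `2^{-k}(v + [0,1)ⁿ)` of scale `k`. -/
def dyadicCube (n k : ℕ) (v : Fin n → ℤ) : Set (EuclideanSpace ℝ (Fin n)) :=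
  {x | ∀ i, x i ∈ Set.Ico ((2 : ℝ) ^ (-(k : ℤ)) * v i) ((2 : ℝ) ^ (-(k : ℤ)) * (v i + 1))}

/-- The centre of the dyadic cube `2^{-k}(v + [0,1)ⁿ)`. -/
def cubeCenter (n k : ℕ) (v : Fin n → ℤ) : EuclideanSpace ℝ (Fin n) :=
  WithLp.toLp 2 (fun i => (2 : ℝ) ^ (-(k : ℤ)) * (v i + 1 / 2))

/-- The layers `L_0 = [-1,1)ⁿ`, `L_l = [-2^l,2^l)ⁿ \ [-2^{l-1},2^{l-1})ⁿ`. -/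
def layer (n : ℕ) : ℕ → Set (EuclideanSpace ℝ (Fin n))
  | 0 => {x | ∀ i, x i ∈ Set.Ico (-1 : ℝ) 1}
  | (l + 1) =>
      {x | ∀ i, x i ∈ Set.Ico (-(2 : ℝ) ^ (l + 1)) ((2 : ℝ) ^ (l + 1))} \
        {x | ∀ i, x i ∈ Set.Ico (-(2 : ℝ) ^ l) ((2 : ℝ) ^ l)}

/-- The cube `α ∘ Q` with the same centre as `Q = 2^{-k}(v + [0,1)ⁿ)` and `α` times
its side-length. -/
def scaledCube (n k : ℕ) (v : Fin n → ℤ) (α : ℝ) : Set (EuclideanSpace ℝ (Fin n)) :=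
  {x | ∀ i, x i ∈ Set.Ico (cubeCenter n k v i - α * (2 : ℝ) ^ (-(k : ℤ)) / 2)
      (cubeCenter n k v i + α * (2 : ℝ) ^ (-(k : ℤ)) / 2)}

/-- The Ornstein–Uhlenbeck operator `Lf(x) = -Δf(x) + x·∇f(x)`. -/
def OU (n : ℕ) (f : EuclideanSpace ℝ (Fin n) → ℂ) (x : EuclideanSpace ℝ (Fin n)) : ℂ :=
  -(∑ i : Fin n, iteratedFDeriv ℝ 2 f x ![EuclideanSpace.single i 1, EuclideanSpace.single i 1]) +
    fderiv ℝ f x x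


/-! Outside `F*` some admissible ball `B` carries more than half of its gaussian mass in `Fᶜ`, so
the average of `1_{Fᶜ}` over `B` exceeds `1/2`. These balls have radii at most `K̃`, so the
Besicovitch covering theorem sorts a subfamily covering `(F*)ᶜ` into `N` families of disjoint
balls, `N` depending only on the dimension; each family has mass at most `2 γ(Fᶜ)`. -/

section

variable {α : Type*} [MeasurableSpace α]

lemma half_lt_measure_compl_inter {μ : Measure α} {s t : Set α} (hs : μ s ≠ ∞)
    (h : μ (t ∩ s) < μ s / 2) : μ s / 2 < μ (tᶜ ∩ s) := by
  by_contra! h'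
  have : μ s < μ s :=
    calc μ s ≤ μ (s ∩ t) + μ (s \ t) := measure_le_inter_add_sdiff μ s t
      _ = μ (t ∩ s) + μ (tᶜ ∩ s) := by rw [inter_comm, sdiff_eq_compl_inter]
      _ < μ s / 2 + μ s / 2 := ENNReal.add_lt_add_of_lt_of_le (by finiteness) h h'
      _ = μ s := ENNReal.add_halves _
  exact this.false

lemma measure_biUnion_le_mul_of_pairwiseDisjoint {ι : Type*} {μ : Measure α} {c : ℝ≥0∞}
    {t : Set α} {u : Set ι} {B : ι → Set α} (hu : u.Countable) (hd : u.PairwiseDisjoint B)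
    (hB : ∀ j ∈ u, MeasurableSet (B j)) (ht : MeasurableSet t)
    (h : ∀ j ∈ u, μ (B j) ≤ c * μ (t ∩ B j)) : μ (⋃ j ∈ u, B j) ≤ c * μ t :=
  calc μ (⋃ j ∈ u, B j) = ∑' j : u, μ (B j) := measure_biUnion hu hd hB
    _ ≤ ∑' j : u, c * μ (t ∩ B j) := ENNReal.tsum_le_tsum fun j => h j j.2
    _ = c * μ (⋃ j ∈ u, t ∩ B j) := by
      rw [ENNReal.tsum_mul_left, measure_biUnion hu (hd.mono fun j => inter_subset_right)
        fun j hj => ht.inter (hB j hj)]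
    _ ≤ c * μ t := by gcongr; exact iUnion₂_subset fun j _ => inter_subset_left

end

namespace Besicovitch

variable {α : Type*} [MeasurableSpace α] [MetricSpace α] [SecondCountableTopology α]
  [OpensMeasurableSpace α] [HasBesicovitchCovering α]

theorem exists_measure_le_mul_of_forall_exists_ball :
    ∃ N : ℕ, ∀ (μ : Measure α) (c : ℝ≥0∞) (R : ℝ) (s t : Set α), MeasurableSet t →
      (∀ x ∈ s, ∃ r ∈ Ioc 0 R, μ (ball x r) ≤ c * μ (t ∩ ball x r)) → μ s ≤ N * c * μ t := by
  obtain ⟨N, τ, hτ, hN⟩ := HasBesicovitchCovering.no_satelliteConfig (α := α)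
  refine ⟨N, fun μ c R s t ht h => ?_⟩
  choose! r hr hball using h
  let p : BallPackage s α :=
    { c := (↑), r := fun x => r x, rpos := fun x => (hr x x.2).1, r_bound := R,
      r_le := fun x => (hr x x.2).2 }
  obtain ⟨u, hu_disj, hu_cover⟩ := exist_disjoint_covering_families hτ hN p
  have family_le (i : Fin N) : μ (⋃ j ∈ u i, ball (p.c j) (p.r j)) ≤ c * μ t := by
    have hd : (u i).PairwiseDisjoint fun j => ball (p.c j) (p.r j) :=
      (hu_disj i).mono fun j => ball_subset_closedBall
    exact measure_biUnion_le_mul_of_pairwiseDisjoint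
      (hd.countable_of_isOpen (fun j _ => isOpen_ball) fun j _ => nonempty_ball.2 (p.rpos j))
      hd (fun j _ => measurableSet_ball) ht fun j _ => hball j j.2
  calc μ s ≤ μ (⋃ i, ⋃ j ∈ u i, ball (p.c j) (p.r j)) :=
        measure_mono fun x hx => hu_cover ⟨⟨x, hx⟩, rfl⟩
    _ ≤ ∑ i, μ (⋃ j ∈ u i, ball (p.c j) (p.r j)) := measure_iUnion_fintype_le _ _
    _ ≤ ∑ _i : Fin N, c * μ t := Finset.sum_le_sum fun i _ => family_le i
    _ = N * c * μ t := by simp [mul_assoc]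

end Besicovitch

lemma mfun_le_one {n : ℕ} (x : EuclideanSpace ℝ (Fin n)) : mfun x ≤ 1 := by
  unfold mfun
  split_ifs with h
  · exact le_rfl
  · exact inv_le_one_of_one_le₀ (le_of_not_ge h)

instance (n : ℕ) : IsLocallyFiniteMeasure (gaussMeasure n) :=
  IsLocallyFiniteMeasure.withDensity_ofReal (by fun_prop)

instance (n : ℕ) : (gaussMeasure n).IsOpenPosMeasure :=
  (withDensity_absolutelyContinuous' (by fun_prop)
    (ae_of_all _ fun _ => (ENNReal.ofReal_pos.2 (by positivity)).ne')).isOpenPosMeasure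

lemma measure_inter_ball_div_le_Mstar_indicator {n : ℕ} {a r : ℝ}
    {x : EuclideanSpace ℝ (Fin n)} {S : Set (EuclideanSpace ℝ (Fin n))} (hS : MeasurableSet S)
    (hr : 0 < r) (hra : r ≤ a * mfun x) :
    gaussMeasure n (S ∩ ball x r) / gaussMeasure n (ball x r) ≤
      Mstar n a (S.indicator fun _ => 1) x := by
  have h_indicator : (fun y => ENNReal.ofReal |S.indicator (fun _ => (1 : ℝ)) y|) =
      S.indicator fun _ => 1 := by
    funext y
    by_cases hy : y ∈ S <;> simp [hy]
  refine le_trans (le_of_eq ?_) (le_iSup₂_of_le r hr (le_iSup_of_le hra le_rfl))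
  rw [h_indicator, lintegral_indicator_const hS, one_mul, Measure.restrict_apply hS,
    ENNReal.div_eq_inv_mul]

section Fstar

variable {n : ℕ} {K : ℝ} {F : Set (EuclideanSpace ℝ (Fin n))}

def Fstar (n : ℕ) (K : ℝ) (F : Set (EuclideanSpace ℝ (Fin n))) :
    Set (EuclideanSpace ℝ (Fin n)) :=
  {x | ∀ r ∈ Ioc 0 (K * mfun x), gaussMeasure n (ball x r) / 2 ≤ gaussMeasure n (F ∩ ball x r)}

lemma exists_half_lt_measure_compl_inter_of_notMem_Fstar {x : EuclideanSpace ℝ (Fin n)}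
    (hx : x ∉ Fstar n K F) :
    ∃ r ∈ Ioc 0 (K * mfun x), gaussMeasure n (ball x r) / 2 < gaussMeasure n (Fᶜ ∩ ball x r) := by
  simp only [Fstar, mem_ofPred_eq, not_forall, not_le] at hx
  obtain ⟨r, hr, hlt⟩ := hx
  exact ⟨r, hr, half_lt_measure_compl_inter measure_ball_lt_top.ne hlt⟩

lemma compl_Fstar_subset_Mstar (hF : MeasurableSet F) :
    (Fstar n K F)ᶜ ⊆ {x | 1 / 2 < Mstar n K (Fᶜ.indicator fun _ => 1) x} := by
  intro x hx
  obtain ⟨r, ⟨hr, hrK⟩, hlt⟩ := exists_half_lt_measure_compl_inter_of_notMem_Fstar hx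
  refine lt_of_lt_of_le ?_ (measure_inter_ball_div_le_Mstar_indicator hF.compl hr hrK)
  rwa [ENNReal.lt_div_iff_mul_lt (.inl (measure_ball_pos _ x hr).ne') (.inl measure_ball_lt_top.ne),
    one_div, ← ENNReal.div_eq_inv_mul]

lemma measure_compl_Fstar_le (hK : 0 < K) :
    ∃ N : ℕ, ∀ F : Set (EuclideanSpace ℝ (Fin n)), MeasurableSet F →
      gaussMeasure n (Fstar n K F)ᶜ ≤ N * 2 * gaussMeasure n Fᶜ := by
  obtain ⟨N, hN⟩ := Besicovitch.exists_measure_le_mul_of_forall_exists_ball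
    (α := EuclideanSpace ℝ (Fin n))
  refine ⟨N, fun F hF => hN _ _ K _ _ hF.compl fun x hx => ?_⟩
  obtain ⟨r, ⟨hr, hrK⟩, hlt⟩ := exists_half_lt_measure_compl_inter_of_notMem_Fstar hx
  refine ⟨r, ⟨hr, hrK.trans (mul_le_of_le_one_right hK.le (mfun_le_one x))⟩, ?_⟩
  rw [mul_comm, ← ENNReal.div_le_iff_le_mul (.inl two_ne_zero) (.inl ENNReal.ofNat_ne_top)]
  exact hlt.le

end Fstar

/-- the complement of
`F* = {x : γ(F ∩ B(x,r)) ≥ ½ γ(B(x,r)) for all r ∈ (0, K̃·m(x)]}` is contained in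
`{M*_{K̃}(1_{∁F}) > ½}`, and consequently `γ(∁F*) ≤ C γ(∁F)`. -/
theorem Fstar_complement (n : ℕ) (Ktilde : ℝ) (hK : 0 < Ktilde) :
    ∃ C > (0 : ℝ), ∀ F : Set (EuclideanSpace ℝ (Fin n)), IsClosed F →
      ({x : EuclideanSpace ℝ (Fin n) | ∀ r ∈ Set.Ioc (0 : ℝ) (Ktilde * mfun x),
          gaussMeasure n (ball x r) / 2 ≤ gaussMeasure n (F ∩ ball x r)}ᶜ ⊆
        {x | (1 / 2 : ℝ≥0∞) < Mstar n Ktilde (Fᶜ.indicator fun _ => (1 : ℝ)) x}) ∧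
      gaussMeasure n
          {x : EuclideanSpace ℝ (Fin n) | ∀ r ∈ Set.Ioc (0 : ℝ) (Ktilde * mfun x),
            gaussMeasure n (ball x r) / 2 ≤ gaussMeasure n (F ∩ ball x r)}ᶜ ≤
        ENNReal.ofReal C * gaussMeasure n Fᶜ := by
  obtain ⟨N, hN⟩ := measure_compl_Fstar_le (n := n) hK
  refine ⟨2 * N + 1, by positivity, fun F hF =>
    ⟨compl_Fstar_subset_Mstar hF.measurableSet, (hN F hF.measurableSet).trans ?_⟩⟩
  gcongr
  rw [← ENNReal.ofReal_natCast, ← ENNReal.ofReal_ofNat, ← ENNReal.ofReal_mul (by positivity)]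
  exact ENNReal.ofReal_le_ofReal (by linarith)

end
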